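/- Let X ∈ ℝ^{1,n-1} with ⟨X,X⟩ = 1. The affine isometries of Minkowski space ℝ^{1,n-1} that are involutions and fix setwise every spacelike affine hyperplane whose normal direction lies in the hyperplane X^⊥ (equivalently, fix pointwise the corresponding degenerate half-pipe hyperplane) are exactly the transformations (r_X, v) with v ∈ Span(X). In particular they form a one-parameter family. -/

import Mathlib

open scoped BigOperators

/-- The Minkowski bilinear form of signature `(1,n-1)` on `ℝ^{1,n-1} = ℝⁿ`. -/
noncomputable def mink (n : ℕ) (x y : Fin n → ℝ) : ℝ :=
  ∑ i : Fin n, (if (i : ℕ) = 0 then (-1 : ℝ) else 1) * x i * y i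

/-- The reflection in the Minkowski-orthogonal complement of a unit spacelike vector `X`. -/
noncomputable def mrefl (n : ℕ) (X v : Fin n → ℝ) : Fin n → ℝ :=
  v - (2 * mink n v X) • X

/-!
If `g = (A, a)` maps every hyperplane `{x | ⟪x - x₀, T⟫ = 0}` with `T` timelike and `T ⊥ X`
onto itself, then `g x₀ - x₀` is orthogonal to every such `T`. These `T` span `X^⊥`, so
`g x₀ - x₀ ∈ ℝ X` for every `x₀`: thus `a ∈ ℝ X` and `A x = x + ν x • X` for a linear form `ν`.
Since `A` is an isometry, `ν x * (ν x + 2 ⟪x, X⟫) = 0` for all `x`, and a product of two linear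
forms vanishes identically only if one of them does. Hence `A = id` (excluded, as it forces
`a = 0`) or `ν = -2 ⟪·, X⟫`, i.e. `A = r_X`. Conversely `(r_X, c X)` is an involution moving
points only along `X`, so it preserves each of these hyperplanes.
-/

lemma LinearMap.eq_zero_or_eq_zero_of_forall_mul_eq_zero {R M : Type*} [Semiring R]
    [NoZeroDivisors R] [AddCommMonoid M] [Module R M] {φ ψ : M →ₗ[R] R}
    (h : ∀ x, φ x * ψ x = 0) : φ = 0 ∨ ψ = 0 := by
  by_contra! hne
  obtain ⟨x, hx⟩ : ∃ x, φ x ≠ 0 := not_forall.mp fun h' => hne.1 (LinearMap.ext h')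
  obtain ⟨y, hy⟩ : ∃ y, ψ y ≠ 0 := not_forall.mp fun h' => hne.2 (LinearMap.ext h')
  have hψx : ψ x = 0 := (mul_eq_zero.mp (h x)).resolve_left hx
  have hφy : φ y = 0 := (mul_eq_zero.mp (h y)).resolve_right hy
  have hxy := h (x + y)
  rw [map_add, map_add, hψx, hφy, add_zero, zero_add] at hxy
  exact mul_ne_zero hx hy hxy

section MinkowskiForm

variable {n : ℕ}

lemma mink_comm (x y : Fin n → ℝ) : mink n x y = mink n y x := by
  simp only [mink, mul_right_comm]

lemma mink_add_left (x y z : Fin n → ℝ) : mink n (x + y) z = mink n x z + mink n y z := by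
  simp only [mink, Pi.add_apply, mul_add, add_mul, Finset.sum_add_distrib]

lemma mink_smul_left (c : ℝ) (x y : Fin n → ℝ) : mink n (c • x) y = c * mink n x y := by
  simp only [mink, Pi.smul_apply, smul_eq_mul, Finset.mul_sum]
  exact Finset.sum_congr rfl fun _ _ => by ring

lemma mink_add_right (x y z : Fin n → ℝ) : mink n x (y + z) = mink n x y + mink n x z := by
  rw [mink_comm, mink_add_left, mink_comm y, mink_comm z]

lemma mink_smul_right (c : ℝ) (x y : Fin n → ℝ) : mink n x (c • y) = c * mink n x y := by
  rw [mink_comm, mink_smul_left, mink_comm]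

noncomputable def minkForm (n : ℕ) : LinearMap.BilinForm ℝ (Fin n → ℝ) :=
  LinearMap.mk₂ ℝ (mink n) mink_add_left mink_smul_left mink_add_right mink_smul_right

lemma mink_sub_left (x y z : Fin n → ℝ) : mink n (x - y) z = mink n x z - mink n y z :=
  LinearMap.map_sub₂ (minkForm n) x y z

lemma mink_zero_left (y : Fin n → ℝ) : mink n 0 y = 0 := LinearMap.map_zero₂ (minkForm n) y

lemma mink_single_left (i : Fin n) (y : Fin n → ℝ) :
    mink n (Pi.single i 1) y = (if (i : ℕ) = 0 then (-1 : ℝ) else 1) * y i := by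
  rw [mink, Finset.sum_eq_single i (fun j _ hj => by simp [hj]) (by simp)]
  simp

lemma eq_zero_of_forall_mink_eq_zero {u : Fin n → ℝ} (h : ∀ z, mink n u z = 0) : u = 0 := by
  funext i
  have hi := h (Pi.single i 1)
  rw [mink_comm, mink_single_left] at hi
  split_ifs at hi <;> simpa using hi

lemma mink_add_smul_self (x y : Fin n → ℝ) (c : ℝ) :
    mink n (x + c • y) (x + c • y) = mink n x x + 2 * c * mink n x y + c ^ 2 * mink n y y := by
  simp only [mink_add_left, mink_add_right, mink_smul_left, mink_smul_right, mink_comm y x]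
  ring

lemma exists_mink_self_smul_add_neg {T : Fin n → ℝ} (hT : mink n T T < 0) (u : Fin n → ℝ) :
    ∃ q : ℝ, mink n (u + q • T) (u + q • T) < 0 := by
  by_contra! h
  simp only [mink_add_smul_self] at h
  have hdiscr : discrim (mink n T T) (2 * mink n u T) (mink n u u) ≤ 0 :=
    discrim_le_zero fun q => (h q).trans_eq (by ring)
  have h1 := h 1
  have h2 := h (-1)
  rw [discrim] at hdiscr
  nlinarith

end MinkowskiForm

section UnitSpacelike

variable {n : ℕ} {X : Fin n → ℝ}

lemma ne_zero_of_mink_self_eq_one (hX : mink n X X = 1) : X ≠ 0 := by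
  rintro rfl
  simp [mink_zero_left] at hX

lemma mink_sub_mink_smul_left (hX : mink n X X = 1) (v : Fin n → ℝ) :
    mink n (v - mink n v X • X) X = 0 := by
  rw [mink_sub_left, mink_smul_left, hX, mul_one, sub_self]

lemma exists_timelike_orthogonal (hX : mink n X X = 1) :
    ∃ T, mink n T T < 0 ∧ mink n T X = 0 := by
  have hn : 0 < n := Nat.pos_of_ne_zero (by rintro rfl; simp [mink] at hX)
  set e : Fin n → ℝ := Pi.single ⟨0, hn⟩ 1
  refine ⟨e - mink n e X • X, ?_, mink_sub_mink_smul_left hX e⟩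
  rw [sub_eq_add_neg, ← neg_smul, mink_add_smul_self, hX]
  have he : mink n e e = -1 := by simp [e, mink_single_left]
  nlinarith [sq_nonneg (mink n e X)]

lemma mink_eq_zero_of_forall_timelike (hX : mink n X X = 1) {w u : Fin n → ℝ}
    (hw : ∀ T, mink n T T < 0 → mink n T X = 0 → mink n w T = 0) (hu : mink n u X = 0) :
    mink n w u = 0 := by
  obtain ⟨T, hTT, hTX⟩ := exists_timelike_orthogonal hX
  obtain ⟨q, hq⟩ := exists_mink_self_smul_add_neg hTT u
  have h := hw (u + q • T) hq (by rw [mink_add_left, mink_smul_left, hTX, hu, mul_zero, add_zero])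
  rwa [mink_add_right, mink_smul_right, hw T hTT hTX, mul_zero, add_zero] at h

lemma eq_mink_smul_of_forall_orthogonal (hX : mink n X X = 1) {w : Fin n → ℝ}
    (hw : ∀ u, mink n u X = 0 → mink n w u = 0) : w = mink n w X • X := by
  rw [← sub_eq_zero]
  refine eq_zero_of_forall_mink_eq_zero fun z => ?_
  have hz : z = (z - mink n z X • X) + mink n z X • X := by abel
  rw [hz, mink_add_right, mink_smul_right, mink_sub_left, mink_smul_left,
    hw _ (mink_sub_mink_smul_left hX z), mink_comm X, mink_sub_mink_smul_left hX z,
    mink_sub_mink_smul_left hX w]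
  ring

lemma sub_eq_mink_smul_of_forall_image_eq (hX : mink n X X = 1) {g : (Fin n → ℝ) → Fin n → ℝ}
    (hg : ∀ H : Set (Fin n → ℝ), (∃ T x₀ : Fin n → ℝ, mink n T T < 0 ∧ mink n T X = 0 ∧
      H = {x | mink n (x - x₀) T = 0}) → g '' H = H) (x₀ : Fin n → ℝ) :
    g x₀ - x₀ = mink n (g x₀ - x₀) X • X := by
  refine eq_mink_smul_of_forall_orthogonal hX fun u hu => mink_eq_zero_of_forall_timelike hX ?_ hu
  intro T hTT hTX
  have hmem : g x₀ ∈ g '' {x | mink n (x - x₀) T = 0} := ⟨x₀, by simp [mink_zero_left], rfl⟩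
  rwa [hg _ ⟨T, x₀, hTT, hTX, rfl⟩] at hmem

lemma eq_id_or_eq_mrefl (hX : mink n X X = 1) {A : (Fin n → ℝ) →ₗ[ℝ] Fin n → ℝ}
    (hA : ∀ x, mink n (A x) (A x) = mink n x x)
    (hdisp : ∀ x, A x - x = mink n (A x - x) X • X) :
    (∀ x, A x = x) ∨ ∀ x, A x = mrefl n X x := by
  set φ := (minkForm n).flip X
  have hφ : ∀ x, φ x = mink n x X := fun _ => rfl
  set ν := φ ∘ₗ (A - LinearMap.id)
  have hν : ∀ x, A x = x + ν x • X := fun x => by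
    rw [show ν x = mink n (A x - x) X from rfl, ← hdisp]
    abel
  have hquad : ∀ x, ν x * (ν + (2 : ℝ) • φ) x = 0 := fun x => by
    have h := hA x
    rw [hν x, mink_add_smul_self, hX] at h
    rw [LinearMap.add_apply, LinearMap.smul_apply, smul_eq_mul, hφ]
    linear_combination h
  rcases LinearMap.eq_zero_or_eq_zero_of_forall_mul_eq_zero hquad with h | h
  · exact Or.inl fun x => by rw [hν x, h, LinearMap.zero_apply, zero_smul, add_zero]
  · refine Or.inr fun x => ?_
    have hx := LinearMap.congr_fun h x
    rw [LinearMap.add_apply, LinearMap.smul_apply, smul_eq_mul, hφ, LinearMap.zero_apply] at hx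
    rw [hν x, mrefl, eq_neg_of_add_eq_zero_left hx, neg_smul, sub_eq_add_neg]

lemma mrefl_add_smul_sub (x : Fin n → ℝ) (c : ℝ) :
    mrefl n X x + c • X - x = (c - 2 * mink n x X) • X := by
  rw [mrefl]
  module

lemma mrefl_smul_self (hX : mink n X X = 1) (c : ℝ) : mrefl n X (c • X) = -(c • X) := by
  rw [mrefl, mink_smul_left, hX]
  module

lemma mrefl_mrefl (hX : mink n X X = 1) (x : Fin n → ℝ) : mrefl n X (mrefl n X x) = x := by
  simp only [mrefl, mink_sub_left, mink_smul_left, hX]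
  module

lemma involutive_mrefl_add_smul (hX : mink n X X = 1) (c : ℝ) :
    Function.Involutive fun x => mrefl n X x + c • X := fun x => by
  simp only [mrefl, mink_add_left, mink_sub_left, mink_smul_left, hX]
  module

lemma exists_mrefl_add_smul_ne (hX : mink n X X = 1) (c : ℝ) :
    ∃ x, mrefl n X x + c • X ≠ x := by
  refine ⟨((c - 1) / 2) • X, fun h => ne_zero_of_mink_self_eq_one hX ?_⟩
  rw [← sub_eq_zero.mpr h, mrefl_add_smul_sub, mink_smul_left, hX]
  module

lemma image_mrefl_add_smul_hyperplane (hX : mink n X X = 1) (c : ℝ) {T : Fin n → ℝ}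
    (hTX : mink n T X = 0) (x₀ : Fin n → ℝ) :
    (fun x => mrefl n X x + c • X) '' {x | mink n (x - x₀) T = 0} =
      {x | mink n (x - x₀) T = 0} := by
  have hg := involutive_mrefl_add_smul hX c
  rw [Set.image_eq_preimage_of_inverse hg.leftInverse hg.rightInverse]
  ext x
  have hx : mrefl n X x + c • X - x₀ = (x - x₀) + (c - 2 * mink n x X) • X := by
    rw [← mrefl_add_smul_sub]
    abel
  simp only [Set.mem_preimage, Set.mem_ofPred_eq, hx, mink_add_left, mink_smul_left, mink_comm X T,
    hTX, mul_zero, add_zero]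

end UnitSpacelike

theorem stmt11_general (n : ℕ) (X : Fin n → ℝ) (hX : mink n X X = 1)
    (A : (Fin n → ℝ) →ₗ[ℝ] (Fin n → ℝ)) (a : Fin n → ℝ)
    (hA : ∀ x y, mink n (A x) (A y) = mink n x y) :
    ((∀ x, A (A x) = x) ∧ A a + a = 0 ∧ (∃ x, A x + a ≠ x) ∧
      (∀ H : Set (Fin n → ℝ),
        (∃ T x₀ : Fin n → ℝ, mink n T T < 0 ∧ mink n T X = 0 ∧
          H = {x | mink n (x - x₀) T = 0}) →
        (fun x => A x + a) '' H = H)) ↔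
      ((∀ x, A x = mrefl n X x) ∧ ∃ c : ℝ, a = c • X) := by
  constructor
  · rintro ⟨-, hAa, ⟨x₁, hx₁⟩, hfix⟩
    have hdisp := sub_eq_mink_smul_of_forall_image_eq hX hfix
    have ha : a = mink n a X • X := by simpa using hdisp 0
    have hAdisp : ∀ x, A x - x = mink n (A x - x) X • X := fun x => by
      have h := hdisp x
      rwa [add_sub_right_comm, mink_add_left, add_smul, ← ha, add_left_inj] at h
    rcases eq_id_or_eq_mrefl hX (fun x => hA x x) hAdisp with hid | hrefl
    · have ha0 : a = 0 := by
        rw [hid, ← two_smul ℝ, smul_eq_zero] at hAa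
        exact hAa.resolve_left two_ne_zero
      exact absurd (by rw [hid, ha0, add_zero]) hx₁
    · exact ⟨hrefl, _, ha⟩
  · rintro ⟨hAr, c, rfl⟩
    simp_rw [hAr]
    exact ⟨mrefl_mrefl hX, by rw [mrefl_smul_self hX, neg_add_cancel],
      exists_mrefl_add_smul_ne hX c,
      fun H ⟨T, x₀, _, hTX, hH⟩ => hH ▸ image_mrefl_add_smul_hyperplane hX c hTX x₀⟩

/-- For a unit spacelike vector `X`, an affine isometry `(A, a)` of Minkowski space is a
nontrivial involution fixing setwise every spacelike affine hyperplane whose (timelike)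
normal direction lies in `X^⊥` iff `A = r_X` and `a ∈ Span(X)`.  In particular such
transformations form the one-parameter family `{(r_X, v) : v ∈ Span(X)}`. -/
theorem stmt11 (n : ℕ) (hn : 2 ≤ n) (X : Fin n → ℝ) (hX : mink n X X = 1)
    (A : (Fin n → ℝ) →ₗ[ℝ] (Fin n → ℝ)) (a : Fin n → ℝ)
    (hA : ∀ x y, mink n (A x) (A y) = mink n x y) :
    ((∀ x, A (A x) = x) ∧ A a + a = 0 ∧ (∃ x, A x + a ≠ x) ∧
      (∀ H : Set (Fin n → ℝ),
        (∃ T x₀ : Fin n → ℝ, mink n T T < 0 ∧ mink n T X = 0 ∧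
          H = {x | mink n (x - x₀) T = 0}) →
        (fun x => A x + a) '' H = H)) ↔
      ((∀ x, A x = mrefl n X x) ∧ ∃ c : ℝ, a = c • X) :=
  stmt11_general n X hX A a hA
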